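/- arXiv:2107.03042 — 6 statements merged into one kernel-verified Lean document; each statement's English description precedes it below -/
import Mathlib

section
/- Let k_d = 1/(2d-1) and X = k_d(X_1 + X_2 + X_4 + X_5 + X_7 + X_8) where X_1,…,X_9 are the standard phase-covariant basis operators on (ℂ^d)^{⊗3}. Then X is positive semidefinite and Tr_{23} X = 𝟙_d. -/
open scoped BigOperators ComplexOrder
open Matrix

noncomputable section

/-- Matrix unit `|p⟩⟨q|` on the triple-index space. -/
def E3 (d : ℕ) (p q : Fin d × Fin d × Fin d) :
    Matrix (Fin d × Fin d × Fin d) (Fin d × Fin d × Fin d) ℂ :=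
  Matrix.single p q 1

def X1 (d : ℕ) := ∑ i : Fin d, E3 d (i,i,i) (i,i,i)

def X2 (d : ℕ) := ∑ i : Fin d, ∑ k : Fin d,
  if i ≠ k then E3 d (i,i,k) (i,i,k) + E3 d (i,k,i) (i,k,i) else 0

def X3 (d : ℕ) := ∑ i : Fin d, ∑ k : Fin d,
  if i ≠ k then E3 d (k,i,i) (k,i,i) else 0

def X4 (d : ℕ) := ∑ i : Fin d, ∑ k : Fin d,
  if i ≠ k then E3 d (k,i,k) (i,i,i) + E3 d (i,i,i) (k,i,k)
    + E3 d (k,k,i) (i,i,i) + E3 d (i,i,i) (k,k,i) else 0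

def X5 (d : ℕ) := ∑ i : Fin d, ∑ k : Fin d,
  if i ≠ k then E3 d (i,i,k) (i,k,i) + E3 d (i,k,i) (i,i,k) else 0

def X6 (d : ℕ) := ∑ i : Fin d, ∑ k : Fin d, ∑ l : Fin d,
  if i ≠ k ∧ k ≠ l ∧ i ≠ l then E3 d (i,k,l) (i,k,l) else 0

def X7 (d : ℕ) := ∑ i : Fin d, ∑ k : Fin d, ∑ l : Fin d,
  if i ≠ k ∧ k ≠ l ∧ i ≠ l then E3 d (k,k,l) (i,l,i) + E3 d (l,k,l) (i,i,k) else 0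

def X8 (d : ℕ) := ∑ i : Fin d, ∑ k : Fin d, ∑ l : Fin d,
  if i ≠ k ∧ k ≠ l ∧ i ≠ l then E3 d (k,k,l) (i,i,l) + E3 d (l,k,l) (i,k,i) else 0

def X9 (d : ℕ) := ∑ i : Fin d, ∑ k : Fin d, ∑ l : Fin d,
  if i ≠ k ∧ k ≠ l ∧ i ≠ l then E3 d (i,k,l) (i,l,k) else 0

/-- Partial trace over the second and third tensor factors. -/
def ptrace23 (d : ℕ)
    (M : Matrix (Fin d × Fin d × Fin d) (Fin d × Fin d × Fin d) ℂ) :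
    Matrix (Fin d) (Fin d) ℂ :=
  Matrix.of fun i l => ∑ j : Fin d, ∑ k : Fin d, M (i,j,k) (l,j,k)

/-- The projection `(φ_d^+)^{⊗3}`, whose entries are all `1/d³`. -/
def Phi3 (d : ℕ) : Matrix (Fin d × Fin d × Fin d) (Fin d × Fin d × Fin d) ℂ :=
  Matrix.of fun _ _ => 1 / (d : ℂ)^3

end

/-!
Let `w_m = Σ_a (|a m a⟩ + |a a m⟩)`, with `|m m m⟩` counted once, and let `B` be the `0/1` matrix
with rows `w_m`. Expanding `Σ_m |w_m⟩⟨w_m|` by the shape of the pair of basis vectors gives exactly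
`X_1 + X_2 + X_4 + X_5 + X_7 + X_8`, so `X = k_d Bᴴ B ⪰ 0`. A triple `(i, j, k)` lies in the support
of at most one `w_m`, and it lies in some support iff `j = i` or `k = i`; hence `Tr_23 (Bᴴ B)` is
diagonal with entries `2d - 1`.
-/

open Matrix

namespace PhaseCovariantCloning

lemma ite_add_zero {M : Type*} [AddZeroClass M] (P : Prop) [Decidable P] (x y : M) :
    (if P then x + y else 0) = (if P then x else 0) + (if P then y else 0) := by
  split_ifs <;> simp

section IndicatorSums

variable {ι R : Type*} [Fintype ι] [DecidableEq ι] [AddCommMonoid R] (r : R)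
  {Q : Prop} [Decidable Q]

lemma sum_ite_eq_of_iff {P : ι → Prop} [DecidablePred P] (i₀ : ι) (h : ∀ i, P i ↔ i = i₀ ∧ Q) :
    (∑ i, if P i then r else 0) = if Q then r else 0 := by
  simp only [h, ite_and, Finset.sum_ite_eq', Finset.mem_univ, if_true]

lemma sum_sum_ite_eq_of_iff {P : ι → ι → Prop} [∀ i k, Decidable (P i k)] (i₀ k₀ : ι)
    (h : ∀ i k, P i k ↔ i = i₀ ∧ k = k₀ ∧ Q) :
    (∑ i, ∑ k, if P i k then r else 0) = if Q then r else 0 := by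
  simp only [h, ite_and, Finset.sum_ite_irrel, Finset.sum_const_zero, Finset.sum_ite_eq',
    Finset.mem_univ, if_true]

lemma sum_sum_sum_ite_eq_of_iff {P : ι → ι → ι → Prop} [∀ i k l, Decidable (P i k l)]
    (i₀ k₀ l₀ : ι) (h : ∀ i k l, P i k l ↔ i = i₀ ∧ k = k₀ ∧ l = l₀ ∧ Q) :
    (∑ i, ∑ k, ∑ l, if P i k l then r else 0) = if Q then r else 0 := by
  simp only [h, ite_and, Finset.sum_ite_irrel, Finset.sum_const_zero, Finset.sum_ite_eq',
    Finset.mem_univ, if_true]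

end IndicatorSums

lemma sum_sum_ite_eq_or_eq {ι R : Type*} [Fintype ι] [DecidableEq ι] [Ring R] (i : ι) :
    (∑ j : ι, ∑ k : ι, if j = i ∨ k = i then (1 : R) else 0) = 2 * Fintype.card ι - 1 := by
  have row (j : ι) : (∑ k : ι, if j = i ∨ k = i then (1 : R) else 0)
      = (if j = i then (Fintype.card ι - 1 : R) else 0) + 1 := by
    by_cases hj : j = i <;> simp [hj]
  simp only [row, Finset.sum_add_distrib, Finset.sum_ite_eq', Finset.mem_univ, if_true,
    Finset.sum_const, Finset.card_univ, nsmul_one]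
  rw [two_mul]
  abel

lemma triple_cases {α : Type*} (p : α × α × α) :
    (∃ m, p = (m, m, m)) ∨ (∃ a m, a ≠ m ∧ p = (a, m, a)) ∨ (∃ a m, a ≠ m ∧ p = (a, a, m)) ∨
      (∃ a b c, b ≠ a ∧ c ≠ a ∧ p = (a, b, c)) := by
  obtain ⟨a, b, c⟩ := p
  by_cases hb : b = a <;> by_cases hc : c = a <;> subst_vars <;> simp_all [eq_comm]

variable {d : ℕ}

lemma X1_apply (a b c a' b' c' : Fin d) :
    X1 d (a, b, c) (a', b', c') =
      if a = b ∧ a = c ∧ a' = a ∧ b' = a ∧ c' = a then (1 : ℂ) else 0 := by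
  simp only [X1, E3, Matrix.sum_apply, single_apply, Prod.mk.injEq]
  exact sum_ite_eq_of_iff 1 a (by grind)

lemma X2_apply (a b c a' b' c' : Fin d) :
    X2 d (a, b, c) (a', b', c') =
      (if a = b ∧ a' = a ∧ b' = a ∧ c' = c ∧ a ≠ c then (1 : ℂ) else 0)
      + (if a = c ∧ a' = a ∧ b' = b ∧ c' = a ∧ a ≠ b then 1 else 0) := by
  simp only [X2, E3, Matrix.sum_apply, Matrix.ite_apply, Matrix.add_apply, Matrix.zero_apply,
    single_apply, Prod.mk.injEq, ite_add_zero, Finset.sum_add_distrib, ← ite_and]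
  congr 1
  · exact sum_sum_ite_eq_of_iff 1 a c (by grind)
  · exact sum_sum_ite_eq_of_iff 1 a b (by grind)

lemma X4_apply (a b c a' b' c' : Fin d) :
    X4 d (a, b, c) (a', b', c') =
      (if a = c ∧ a' = b ∧ b' = b ∧ c' = b ∧ b ≠ a then (1 : ℂ) else 0)
      + (if a = b ∧ a = c ∧ b' = a ∧ c' = a' ∧ a ≠ a' then 1 else 0)
      + (if a = b ∧ a' = c ∧ b' = c ∧ c' = c ∧ c ≠ a then 1 else 0)
      + (if a = b ∧ a = c ∧ a' = b' ∧ c' = a ∧ a ≠ a' then 1 else 0) := by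
  simp only [X4, E3, Matrix.sum_apply, Matrix.ite_apply, Matrix.add_apply, Matrix.zero_apply,
    single_apply, Prod.mk.injEq, ite_add_zero, Finset.sum_add_distrib, ← ite_and]
  congr 3
  · exact sum_sum_ite_eq_of_iff 1 b a (by grind)
  · exact sum_sum_ite_eq_of_iff 1 a a' (by grind)
  · exact sum_sum_ite_eq_of_iff 1 c a (by grind)
  · exact sum_sum_ite_eq_of_iff 1 a a' (by grind)

lemma X5_apply (a b c a' b' c' : Fin d) :
    X5 d (a, b, c) (a', b', c') =
      (if a = b ∧ a' = a ∧ b' = c ∧ c' = a ∧ a ≠ c then (1 : ℂ) else 0)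
      + (if a = c ∧ a' = a ∧ b' = a ∧ c' = b ∧ a ≠ b then 1 else 0) := by
  simp only [X5, E3, Matrix.sum_apply, Matrix.ite_apply, Matrix.add_apply, Matrix.zero_apply,
    single_apply, Prod.mk.injEq, ite_add_zero, Finset.sum_add_distrib, ← ite_and]
  congr 1
  · exact sum_sum_ite_eq_of_iff 1 a c (by grind)
  · exact sum_sum_ite_eq_of_iff 1 a b (by grind)

lemma X7_apply (a b c a' b' c' : Fin d) :
    X7 d (a, b, c) (a', b', c') =
      (if a = b ∧ b' = c ∧ a' = c' ∧ a' ≠ a ∧ a ≠ c ∧ a' ≠ c then (1 : ℂ) else 0)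
      + (if a = c ∧ a' = b' ∧ c' = b ∧ a' ≠ b ∧ b ≠ a ∧ a' ≠ a then 1 else 0) := by
  simp only [X7, E3, Matrix.sum_apply, Matrix.ite_apply, Matrix.add_apply, Matrix.zero_apply,
    single_apply, Prod.mk.injEq, ite_add_zero, Finset.sum_add_distrib, ← ite_and]
  congr 1
  · exact sum_sum_sum_ite_eq_of_iff 1 a' a c (by grind)
  · exact sum_sum_sum_ite_eq_of_iff 1 a' b a (by grind)

lemma X8_apply (a b c a' b' c' : Fin d) :
    X8 d (a, b, c) (a', b', c') =
      (if a = b ∧ a' = b' ∧ c' = c ∧ a' ≠ a ∧ a ≠ c ∧ a' ≠ c then (1 : ℂ) else 0)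
      + (if a = c ∧ a' = c' ∧ b' = b ∧ a' ≠ b ∧ b ≠ a ∧ a' ≠ a then 1 else 0) := by
  simp only [X8, E3, Matrix.sum_apply, Matrix.ite_apply, Matrix.add_apply, Matrix.zero_apply,
    single_apply, Prod.mk.injEq, ite_add_zero, Finset.sum_add_distrib, ← ite_and]
  congr 1
  · exact sum_sum_sum_ite_eq_of_iff 1 a' a c (by grind)
  · exact sum_sum_sum_ite_eq_of_iff 1 a' b a (by grind)

/-- The matrix `B`, whose rows are the vectors `w_m`. -/
def cloneMatrix (d : ℕ) : Matrix (Fin d) (Fin d × Fin d × Fin d) ℂ :=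
  of fun m p => if (p.2.1 = m ∧ p.2.2 = p.1) ∨ (p.1 = p.2.1 ∧ p.2.2 = m) then 1 else 0

lemma cloneMatrix_conjTranspose_mul_self_apply (a b c a' b' c' : Fin d) :
    ((cloneMatrix d)ᴴ * cloneMatrix d) (a, b, c) (a', b', c') =
      if ∃ m, ((b = m ∧ c = a) ∨ (a = b ∧ c = m)) ∧ ((b' = m ∧ c' = a') ∨ (a' = b' ∧ c' = m))
      then 1 else 0 := by
  simp only [mul_apply, conjTranspose_apply, cloneMatrix, of_apply, apply_ite star, star_one,
    star_zero, ite_zero_mul_ite_zero, mul_one]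
  rw [Fintype.sum_ite_eq_ite_exists]
  · congr
  · intro m m' hm hm'
    grind

theorem sum_X_eq_cloneMatrix :
    X1 d + X2 d + X4 d + X5 d + X7 d + X8 d = (cloneMatrix d)ᴴ * cloneMatrix d := by
  ext p q
  rcases triple_cases p with ⟨m, rfl⟩ | ⟨a, m, h, rfl⟩ | ⟨a, m, h, rfl⟩ | ⟨a, b, c, hb, hc, rfl⟩ <;>
  rcases triple_cases q with
    ⟨m', rfl⟩ | ⟨a', m', h', rfl⟩ | ⟨a', m', h', rfl⟩ | ⟨a', b', c', hb', hc', rfl⟩ <;>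
  simp only [Matrix.add_apply, X1_apply, X2_apply, X4_apply, X5_apply, X7_apply, X8_apply,
    cloneMatrix_conjTranspose_mul_self_apply] <;>
  simp_all [eq_comm] <;>
  split_ifs <;> grind

lemma ptrace23_smul (c : ℂ) (M : Matrix (Fin d × Fin d × Fin d) (Fin d × Fin d × Fin d) ℂ) :
    ptrace23 d (c • M) = c • ptrace23 d M := by
  ext i l
  simp [ptrace23, Finset.mul_sum]

lemma ptrace23_cloneMatrix :
    ptrace23 d ((cloneMatrix d)ᴴ * cloneMatrix d) = (2 * (d : ℂ) - 1) • 1 := by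
  ext i l
  have same_support (j k : Fin d) :
      (∃ m, ((j = m ∧ k = i) ∨ (i = j ∧ k = m)) ∧ ((j = m ∧ k = l) ∨ (l = j ∧ k = m)))
        ↔ l = i ∧ (j = i ∨ k = i) := by
    constructor
    · rintro ⟨m, hp, hq⟩
      grind
    · rintro ⟨rfl, hj | hk⟩
      exacts [⟨k, by grind⟩, ⟨j, by grind⟩]
  simp only [ptrace23, of_apply, cloneMatrix_conjTranspose_mul_self_apply, same_support]
  by_cases hl : l = i
  · subst hl
    simp only [true_and, sum_sum_ite_eq_or_eq, Fintype.card_fin, Matrix.smul_apply, one_apply_eq,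
      smul_eq_mul, mul_one]
  · simp [hl, Ne.symm hl]

end PhaseCovariantCloning

/-- `X = k_d(X_1+X_2+X_4+X_5+X_7+X_8)` with `k_d = 1/(2d-1)` is positive
semidefinite and has partial trace over factors 2,3 equal to the identity. -/
theorem primal_feasible_cloning (d : ℕ) (hd : 2 ≤ d) :
    ((2 * (d : ℂ) - 1)⁻¹ • (X1 d + X2 d + X4 d + X5 d + X7 d + X8 d)).PosSemidef ∧
    ptrace23 d ((2 * (d : ℂ) - 1)⁻¹ • (X1 d + X2 d + X4 d + X5 d + X7 d + X8 d)) = 1 := by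
  have hk : (0 : ℂ) ≤ (2 * (d : ℂ) - 1)⁻¹ :=
    inv_nonneg.mpr (sub_nonneg.mpr (by exact_mod_cast (by omega : 1 ≤ 2 * d)))
  have hne : (2 * (d : ℂ) - 1) ≠ 0 := by exact_mod_cast (by omega : (2 * d - 1 : ℤ) ≠ 0)
  rw [PhaseCovariantCloning.sum_X_eq_cloneMatrix]
  refine ⟨(posSemidef_conjTranspose_mul_self _).smul hk, ?_⟩
  rw [PhaseCovariantCloning.ptrace23_smul, PhaseCovariantCloning.ptrace23_cloneMatrix, smul_smul,
    inv_mul_cancel₀ hne, one_smul]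
end

section
/- With X_1,…,X_9 as in the phase-covariant cloning setup and X = Σ_i x_i X_i, one has Tr[(φ_d^+)^{⊗3} X] = (1/d²)x_1 + ((d-1)/d²)(2x_2 + x_3 + 4x_4 + 2x_5) + ((d-1)(d-2)/d²)(x_6 + 2x_7 + 2x_8 + x_9), where φ_d^+ = |φ_d^+⟩⟨φ_d^+| and |φ_d^+⟩ = (1/√d)Σ_k |k⟩. -/
open scoped BigOperators ComplexOrder
open Matrix

/-!
Every entry of `(φ_d^+)^{⊗3}` equals `1/d³`, so `Tr[(φ_d^+)^{⊗3} X]` is `1/d³` times the sum of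
all entries of `X`. Each `X_i` is a sum of matrix units indexed by pairs `i ≠ k` or by triples of
distinct indices, so its entry sum is `d`, a multiple of `d(d-1)`, or a multiple of `d(d-1)(d-2)`.
-/

namespace Matrix

variable {m n R : Type*} [Fintype m] [Fintype n] [Semiring R]

def entrySum : Matrix m n R →ₗ[R] R where
  toFun M := ∑ i, ∑ j, M i j
  map_add' M N := by simp only [add_apply, Finset.sum_add_distrib]
  map_smul' c M := by simp only [smul_apply, smul_eq_mul, Finset.mul_sum, RingHom.id_apply]

theorem entrySum_apply (M : Matrix m n R) : entrySum M = ∑ i, ∑ j, M i j := rfl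

@[simp]
theorem entrySum_single [DecidableEq m] [DecidableEq n] (i : m) (j : n) (c : R) :
    entrySum (single i j c) = c := by
  simp [entrySum_apply, single_apply, ite_and]

theorem trace_of_const_mul (c : R) (M : Matrix n n R) :
    ((of fun _ _ => c) * M).trace = c * entrySum M := by
  simp only [trace, diag, mul_apply, of_apply, entrySum_apply, Finset.mul_sum]
  exact Finset.sum_comm

end Matrix

open Fintype

section Counting

variable {α R : Type*} [Fintype α] [DecidableEq α] [Ring R]

theorem Fintype.sum_ite_ne (i : α) (c : R) :
    ∑ k, (if i ≠ k then c else 0) = ((card α : R) - 1) * c := by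
  rw [Finset.sum_ite, Finset.sum_const_zero, add_zero, Finset.sum_const, nsmul_eq_mul,
    Finset.filter_ne, Finset.card_erase_of_mem (Finset.mem_univ i), Finset.card_univ,
    Nat.cast_sub (card_pos_iff.mpr ⟨i⟩), Nat.cast_one]

theorem Fintype.sum_sum_ite_ne (c : R) :
    ∑ i : α, ∑ k, (if i ≠ k then c else 0) = (card α : R) * ((card α : R) - 1) * c := by
  simp only [Fintype.sum_ite_ne, Finset.sum_const, Finset.card_univ, nsmul_eq_mul, mul_assoc]

theorem Fintype.sum_ite_ne_and_ne {i k : α} (hik : i ≠ k) (c : R) :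
    ∑ l, (if k ≠ l ∧ i ≠ l then c else 0) = ((card α : R) - 2) * c := by
  rw [Finset.sum_ite, Finset.sum_const_zero, add_zero, Finset.sum_const, nsmul_eq_mul]
  have hfilter : Finset.univ.filter (fun l => k ≠ l ∧ i ≠ l) = Finset.univ \ {i, k} := by
    ext l
    simp only [Finset.mem_filter, Finset.mem_sdiff, Finset.mem_insert, Finset.mem_singleton,
      Finset.mem_univ, true_and, not_or]
    tauto
  have hcard : Finset.card ({i, k} : Finset α) = 2 := Finset.card_pair hik
  rw [hfilter, Finset.card_sdiff_of_subset (Finset.subset_univ _), hcard, Finset.card_univ,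
    Nat.cast_sub (hcard ▸ Finset.card_le_univ _), Nat.cast_two]

theorem Fintype.sum_sum_sum_ite_ne (c : R) :
    ∑ i : α, ∑ k, ∑ l, (if i ≠ k ∧ k ≠ l ∧ i ≠ l then c else 0)
      = (card α : R) * ((card α : R) - 1) * (((card α : R) - 2) * c) := by
  have inner (i k : α) : ∑ l, (if i ≠ k ∧ k ≠ l ∧ i ≠ l then c else 0)
      = if i ≠ k then ((card α : R) - 2) * c else 0 := by
    by_cases hik : i = k
    · simp [hik]
    · simpa [hik] using sum_ite_ne_and_ne hik c
  simp only [inner, sum_sum_ite_ne]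

end Counting

section EntrySums

variable (d : ℕ)

theorem entrySum_X1 : entrySum (X1 d) = d := by
  simp [X1, E3]

theorem entrySum_X2 : entrySum (X2 d) = 2 * (d * (d - 1)) := by
  simp only [X2, E3, map_sum, apply_ite entrySum, map_add, map_zero, entrySum_single,
    sum_sum_ite_ne, card_fin]
  ring

theorem entrySum_X3 : entrySum (X3 d) = d * (d - 1) := by
  simp only [X3, E3, map_sum, apply_ite entrySum, map_zero, entrySum_single,
    sum_sum_ite_ne, card_fin]
  ring

theorem entrySum_X4 : entrySum (X4 d) = 4 * (d * (d - 1)) := by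
  simp only [X4, E3, map_sum, apply_ite entrySum, map_add, map_zero, entrySum_single,
    sum_sum_ite_ne, card_fin]
  ring

theorem entrySum_X5 : entrySum (X5 d) = 2 * (d * (d - 1)) := by
  simp only [X5, E3, map_sum, apply_ite entrySum, map_add, map_zero, entrySum_single,
    sum_sum_ite_ne, card_fin]
  ring

theorem entrySum_X6 : entrySum (X6 d) = d * (d - 1) * (d - 2) := by
  simp only [X6, E3, map_sum, apply_ite entrySum, map_zero, entrySum_single,
    sum_sum_sum_ite_ne, card_fin]
  ring

theorem entrySum_X7 : entrySum (X7 d) = 2 * (d * (d - 1) * (d - 2)) := by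
  simp only [X7, E3, map_sum, apply_ite entrySum, map_add, map_zero, entrySum_single,
    sum_sum_sum_ite_ne, card_fin]
  ring

theorem entrySum_X8 : entrySum (X8 d) = 2 * (d * (d - 1) * (d - 2)) := by
  simp only [X8, E3, map_sum, apply_ite entrySum, map_add, map_zero, entrySum_single,
    sum_sum_sum_ite_ne, card_fin]
  ring

theorem entrySum_X9 : entrySum (X9 d) = d * (d - 1) * (d - 2) := by
  simp only [X9, E3, map_sum, apply_ite entrySum, map_zero, entrySum_single,
    sum_sum_sum_ite_ne, card_fin]
  ring

end EntrySums

theorem objective_formula_general (d : ℕ) (x : Fin 9 → ℂ) :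
    (Phi3 d * (x 0 • X1 d + x 1 • X2 d + x 2 • X3 d + x 3 • X4 d + x 4 • X5 d
      + x 5 • X6 d + x 6 • X7 d + x 7 • X8 d + x 8 • X9 d)).trace
    = (1 / (d:ℂ)^2) * x 0
      + (((d:ℂ) - 1) / (d:ℂ)^2) * (2 * x 1 + x 2 + 4 * x 3 + 2 * x 4)
      + (((d:ℂ) - 1) * ((d:ℂ) - 2) / (d:ℂ)^2) * (x 5 + 2 * x 6 + 2 * x 7 + x 8) := by
  rw [Phi3, trace_of_const_mul]
  simp only [map_add, map_smul, smul_eq_mul, entrySum_X1, entrySum_X2, entrySum_X3, entrySum_X4,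
    entrySum_X5, entrySum_X6, entrySum_X7, entrySum_X8, entrySum_X9]
  rcases eq_or_ne (d : ℂ) 0 with hd | hd
  · simp [hd]
  · field_simp
    ring

/-- the objective value `Tr[(φ_d^+)^{⊗3} X]` for `X = Σ_i x_i X_i`. -/
theorem objective_formula (d : ℕ) (hd : 2 ≤ d) (x : Fin 9 → ℂ) :
    (Phi3 d * (x 0 • X1 d + x 1 • X2 d + x 2 • X3 d + x 3 • X4 d + x 4 • X5 d
      + x 5 • X6 d + x 6 • X7 d + x 7 • X8 d + x 8 • X9 d)).trace
    = (1 / (d:ℂ)^2) * x 0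
      + (((d:ℂ) - 1) / (d:ℂ)^2) * (2 * x 1 + x 2 + 4 * x 3 + 2 * x 4)
      + (((d:ℂ) - 1) * ((d:ℂ) - 2) / (d:ℂ)^2) * (x 5 + 2 * x 6 + 2 * x 7 + x 8) :=
  objective_formula_general d x
end

section
/- Define Ẑ = Σ_i b_i X_i with b_1 = b_2 = b_3 = b_6 = 2(d-1)/d³ and b_4 = b_5 = b_7 = b_8 = b_9 = -1/d³. Then Ẑ is positive semidefinite for all d ≥ 2. -/
open scoped BigOperators ComplexOrder
open Matrix

/-!
The diagonal operators `X1, X2, X3, X6` are the projections onto the basis vectors `|ikl⟩`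
sorted by which indices coincide, so they add up to the identity and
`Ẑ = d⁻³ (2(d-1) • 1 - XOff d)` with `XOff d = X4 + X5 + X7 + X8 + X9`. This is a symmetric
`0/1` matrix whose row sums are `2(d-1)` on the triples `iii, iik, iki`, `1` on triples with
distinct entries and `0` on the triples `kii`. By Gershgorin's theorem every eigenvalue of
`XOff d` is at most `2(d-1)`, hence `Ẑ` is positive semidefinite.
-/

open Finset

section TupleSums

variable {α M : Type*} [Fintype α] [DecidableEq α] [AddCommMonoid M]

theorem sum_eq_add_sum_ite_ne (a : α) (h : α → M) :
    ∑ x, h x = h a + ∑ x, if a ≠ x then h x else 0 := by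
  rw [← sum_filter, filter_ne, add_sum_erase _ _ (mem_univ a)]

theorem sum_sum_ite_ne_comm (f : α → α → M) :
    ∑ i, ∑ k, (if i ≠ k then f i k else 0)
      = ∑ i, ∑ k, (if i ≠ k then f k i else 0) := by
  rw [sum_comm]
  simp only [ne_comm]

theorem sum_sum_ite_ne_eq_card_sub_one_smul (g : α → M) :
    ∑ i, ∑ k, (if i ≠ k then g i else 0) = (Fintype.card α - 1) • ∑ i, g i := by
  rw [smul_sum]
  refine sum_congr rfl fun i _ => ?_
  rw [← sum_filter, sum_const, filter_ne, card_erase_of_mem (mem_univ i), card_univ]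

theorem sum_distinct_comm₁₂ (f : α → α → α → M) :
    ∑ i, ∑ k, ∑ l, (if i ≠ k ∧ k ≠ l ∧ i ≠ l then f i k l else 0)
      = ∑ i, ∑ k, ∑ l, (if i ≠ k ∧ k ≠ l ∧ i ≠ l then f k i l else 0) := by
  rw [sum_comm]
  exact sum_congr rfl fun i _ => sum_congr rfl fun k _ => sum_congr rfl fun l _ =>
    if_congr (by grind) rfl rfl

theorem sum_distinct_comm₂₃ (f : α → α → α → M) :
    ∑ i, ∑ k, ∑ l, (if i ≠ k ∧ k ≠ l ∧ i ≠ l then f i k l else 0)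
      = ∑ i, ∑ k, ∑ l, (if i ≠ k ∧ k ≠ l ∧ i ≠ l then f i l k else 0) := by
  refine sum_congr rfl fun i _ => ?_
  rw [sum_comm]
  exact sum_congr rfl fun k _ => sum_congr rfl fun l _ => if_congr (by grind) rfl rfl

theorem sum_distinct_eq_card_sub_two_smul (g : α → α → M) :
    ∑ i, ∑ k, ∑ l, (if i ≠ k ∧ k ≠ l ∧ i ≠ l then g k l else 0)
      = (Fintype.card α - 2) • ∑ k, ∑ l, (if k ≠ l then g k l else 0) := by
  rw [sum_comm, smul_sum]
  refine sum_congr rfl fun k _ => ?_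
  rw [sum_comm, smul_sum]
  refine sum_congr rfl fun l _ => ?_
  by_cases hkl : k = l
  · subst hkl
    simp
  rw [if_pos hkl, ← sum_filter, sum_const]
  have hfilter : ({i | i ≠ k ∧ k ≠ l ∧ i ≠ l} : Finset α) = (univ.erase k).erase l := by
    ext i
    simp only [mem_filter, mem_univ, true_and, mem_erase, and_true]
    tauto
  rw [hfilter, card_erase_of_mem (mem_erase.2 ⟨Ne.symm hkl, mem_univ l⟩),
    card_erase_of_mem (mem_univ k), card_univ, Nat.sub_sub]

theorem sum_triple_eq_sum_by_coincidences (F : α × α × α → M) :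
    ∑ p, F p = ∑ i, F (i, i, i)
      + ∑ i, ∑ k, (if i ≠ k then F (i, i, k) + F (i, k, i) else 0)
      + ∑ i, ∑ k, (if i ≠ k then F (k, i, i) else 0)
      + ∑ i, ∑ k, ∑ l, (if i ≠ k ∧ k ≠ l ∧ i ≠ l then F (i, k, l) else 0) := by
  have split_off_diag : ∀ i k, (if i ≠ k then ∑ l, F (i, k, l) else 0)
      = (if i ≠ k then F (i, k, i) else 0) + (if i ≠ k then F (i, k, k) else 0)
        + ∑ l, if i ≠ k ∧ k ≠ l ∧ i ≠ l then F (i, k, l) else 0 := by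
    intro i k
    by_cases hik : i = k
    · simp [hik]
    rw [sum_eq_add_sum_ite_ne i,
      sum_eq_add_sum_ite_ne k (fun l => if i ≠ l then F (i, k, l) else 0)]
    simp only [if_pos hik, add_assoc]
    congr 2
    exact sum_congr rfl fun l _ => by by_cases hkl : k = l <;> by_cases hil : i = l <;> simp [*]
  rw [sum_sum_ite_ne_comm (fun i k => F (k, i, i))]
  simp only [Fintype.sum_prod_type, ite_add_zero, ← sum_add_distrib]
  refine sum_congr rfl fun i _ => ?_
  rw [sum_eq_add_sum_ite_ne i, sum_eq_add_sum_ite_ne i (fun l => F (i, i, l))]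
  simp only [split_off_diag, sum_add_distrib]
  abel

end TupleSums

namespace Matrix

theorem single_one_mulVec_one {n α : Type*} [Fintype n] [DecidableEq n] [NonAssocSemiring α]
    (i j : n) : single i j (1 : α) *ᵥ 1 = Pi.single i 1 := by
  ext k
  simp [single_mulVec_eq]

theorem sum_norm_eq_re_mulVec_one {m n 𝕜 : Type*} [Fintype n] [RCLike 𝕜] {A : Matrix m n 𝕜}
    {i : m} (h : ∀ j, 0 ≤ A i j) : ∑ j, ‖A i j‖ = RCLike.re ((A *ᵥ 1) i) := by
  simp only [mulVec, dotProduct, Pi.one_apply, mul_one, map_sum]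
  exact sum_congr rfl fun j _ => by
    rw [← RCLike.ofReal_re (K := 𝕜) ‖A i j‖, RCLike.norm_of_nonneg' (h j)]

theorem IsHermitian.posSemidef_smul_one_sub_of_sum_norm_le {n 𝕜 : Type*} [Fintype n]
    [DecidableEq n] [RCLike 𝕜] {A : Matrix n n 𝕜} (hA : A.IsHermitian) {c : ℝ}
    (h : ∀ i, ∑ j, ‖A i j‖ ≤ c) : ((c : 𝕜) • 1 - A).PosSemidef := by
  have hM : ((c : 𝕜) • 1 - A).IsHermitian :=
    (isHermitian_one.smul (RCLike.conj_ofReal c)).sub hA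
  rw [hM.posSemidef_iff_eigenvalues_nonneg]
  intro i
  have hμ : Module.End.HasEigenvalue (toLin' ((c : 𝕜) • 1 - A)) (hM.eigenvalues i : 𝕜) := by
    rw [Module.End.hasEigenvalue_iff_mem_spectrum, spectrum_toLin']
    exact spectrum.of_algebraMap_mem 𝕜 (hM.eigenvalues_mem_spectrum_real i)
  -- Gershgorin: the eigenvalue lies within `∑ j ≠ k, ‖A k j‖ ≤ c - ‖A k k‖` of `c - A k k`.
  obtain ⟨k, hdisc⟩ := eigenvalue_mem_ball hμ
  have hoff :
      ∑ j ∈ univ.erase k, ‖((c : 𝕜) • 1 - A) k j‖ = ∑ j ∈ univ.erase k, ‖A k j‖ :=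
    sum_congr rfl fun j hj => by simp [one_apply_ne' (ne_of_mem_erase hj)]
  rw [Metric.mem_closedBall, dist_comm, dist_eq_norm, hoff] at hdisc
  have hrow := h k
  rw [← add_sum_erase _ _ (mem_univ k)] at hrow
  have hre := (RCLike.re_le_norm _).trans hdisc
  have hkk := RCLike.re_le_norm (A k k)
  simp only [sub_apply, smul_apply, one_apply_eq, smul_eq_mul, mul_one, map_sub,
    RCLike.ofReal_re] at hre
  show 0 ≤ hM.eigenvalues i
  linarith

end Matrix

noncomputable def XOff (d : ℕ) : Matrix (Fin d × Fin d × Fin d) (Fin d × Fin d × Fin d) ℂ :=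
  X4 d + X5 d + X7 d + X8 d + X9 d

section Operators

variable (d : ℕ)

theorem X1_add_X2_add_X3_add_X6 : X1 d + X2 d + X3 d + X6 d = 1 := by
  rw [← diagonal_one, ← sum_single_eq_diagonal, sum_triple_eq_sum_by_coincidences]
  rfl

theorem isHermitian_XOff : (XOff d).IsHermitian := by
  refine (((IsHermitian.add ?_ ?_).add ?_).add ?_).add ?_ <;>
    simp only [IsHermitian, X4, X5, X7, X8, X9, E3, conjTranspose_sum, apply_ite conjTranspose,
      conjTranspose_add, conjTranspose_single, conjTranspose_zero, star_one, ite_add_zero,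
      sum_add_distrib]
  · abel
  · abel
  · rw [add_comm]
    congr 1
    · exact (sum_distinct_comm₂₃ _).trans (sum_distinct_comm₁₂ _)
    · exact (sum_distinct_comm₁₂ _).trans (sum_distinct_comm₂₃ _)
  · congr 1
    · exact sum_distinct_comm₁₂ _
    · exact (sum_distinct_comm₁₂ _).trans
        ((sum_distinct_comm₂₃ _).trans (sum_distinct_comm₁₂ _))
  · exact sum_distinct_comm₂₃ _

theorem X4_mulVec_one : X4 d *ᵥ 1 = (2 * (d - 1)) • (X1 d *ᵥ 1) + X2 d *ᵥ 1 := by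
  simp only [X1, X2, X4, E3, sum_mulVec, add_mulVec, apply_ite (· *ᵥ 1), zero_mulVec,
    single_one_mulVec_one, ite_add_zero, sum_add_distrib]
  rw [sum_sum_ite_ne_comm (fun i k => Pi.single (k, i, k) 1),
    sum_sum_ite_ne_comm (fun i k => Pi.single (k, k, i) 1),
    sum_sum_ite_ne_eq_card_sub_one_smul, Fintype.card_fin, two_mul, add_smul]
  abel

theorem X5_mulVec_one : X5 d *ᵥ 1 = X2 d *ᵥ 1 := by
  simp only [X5, X2, E3, sum_mulVec, add_mulVec, apply_ite (· *ᵥ 1), zero_mulVec,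
    single_one_mulVec_one]

theorem X7_mulVec_one : X7 d *ᵥ 1 = (d - 2) • (X2 d *ᵥ 1) := by
  simp only [X7, X2, E3, sum_mulVec, add_mulVec, apply_ite (· *ᵥ 1), zero_mulVec,
    single_one_mulVec_one, ite_add_zero, sum_add_distrib, smul_add]
  rw [sum_distinct_eq_card_sub_two_smul (fun k l => Pi.single (k, k, l) 1),
    sum_distinct_eq_card_sub_two_smul (fun k l => Pi.single (l, k, l) 1),
    sum_sum_ite_ne_comm (fun k l => Pi.single (l, k, l) 1), Fintype.card_fin]

theorem X8_mulVec_one : X8 d *ᵥ 1 = X7 d *ᵥ 1 := by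
  simp only [X8, X7, E3, sum_mulVec, add_mulVec, apply_ite (· *ᵥ 1), zero_mulVec,
    single_one_mulVec_one]

theorem X9_mulVec_one : X9 d *ᵥ 1 = X6 d *ᵥ 1 := by
  simp only [X9, X6, E3, sum_mulVec, apply_ite (· *ᵥ 1), zero_mulVec, single_one_mulVec_one]

theorem XOff_mulVec_one_add (hd : 2 ≤ d) :
    XOff d *ᵥ 1 + ((2 * (d - 1)) • X3 d + (2 * d - 3) • X6 d) *ᵥ 1
      = (2 * (d - 1)) • 1 := by
  have h1 := congrArg (· *ᵥ (1 : Fin d × Fin d × Fin d → ℂ)) (X1_add_X2_add_X3_add_X6 d)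
  simp only [add_mulVec, one_mulVec] at h1
  simp only [XOff, add_mulVec, smul_mulVec, X4_mulVec_one, X5_mulVec_one, X8_mulVec_one,
    X7_mulVec_one, X9_mulVec_one]
  conv_rhs => rw [← h1]
  obtain ⟨e, rfl⟩ := Nat.exists_eq_add_of_le' hd
  rw [show e + 2 - 1 = e + 1 by omega, show e + 2 - 2 = e by omega,
    show 2 * (e + 2) - 3 = 2 * e + 1 by omega]
  module

theorem sum_norm_XOff_le (hd : 2 ≤ d) (p : Fin d × Fin d × Fin d) :
    ∑ q, ‖XOff d p q‖ ≤ 2 * ((d : ℝ) - 1) := by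
  have hoff : ∀ q, 0 ≤ XOff d p q := fun q => by
    simp only [XOff, X4, X5, X7, X8, X9, E3, Matrix.add_apply, Matrix.sum_apply,
      Matrix.ite_apply, Matrix.zero_apply, single_apply]
    positivity
  have hslack : ∀ q, 0 ≤ ((2 * (d - 1)) • X3 d + (2 * d - 3) • X6 d) p q := fun q => by
    simp only [X3, X6, E3, Matrix.add_apply, Matrix.smul_apply, Matrix.sum_apply,
      Matrix.ite_apply, Matrix.zero_apply, single_apply]
    positivity
  have hrow := congrArg RCLike.re (congrFun (XOff_mulVec_one_add d hd) p)
  have hrhs : RCLike.re (((2 * (d - 1)) • (1 : Fin d × Fin d × Fin d → ℂ)) p)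
      = 2 * ((d : ℝ) - 1) := by
    simp [Nat.cast_sub (by omega : 1 ≤ d)]
  rw [Pi.add_apply, map_add, ← sum_norm_eq_re_mulVec_one hoff,
    ← sum_norm_eq_re_mulVec_one hslack, hrhs] at hrow
  linarith [sum_nonneg fun q (_ : q ∈ univ) =>
    norm_nonneg (((2 * (d - 1)) • X3 d + (2 * d - 3) • X6 d) p q)]

end Operators

/-- the dual operator `Ẑ = (2(d-1)/d³)(X_1+X_2+X_3+X_6) - (1/d³)(X_4+X_5+X_7+X_8+X_9)`
is positive semidefinite for all `d ≥ 2`. -/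
theorem dual_posSemidef (d : ℕ) (hd : 2 ≤ d) :
    ((2 * ((d:ℂ) - 1) / (d:ℂ)^3) • (X1 d + X2 d + X3 d + X6 d)
      - ((d:ℂ)^3)⁻¹ • (X4 d + X5 d + X7 d + X8 d + X9 d)).PosSemidef := by
  have hZ : (2 * ((d:ℂ) - 1) / (d:ℂ)^3) • (X1 d + X2 d + X3 d + X6 d)
      - ((d:ℂ)^3)⁻¹ • (X4 d + X5 d + X7 d + X8 d + X9 d)
      = ((d:ℂ)^3)⁻¹ • (((2 * ((d : ℝ) - 1) : ℝ) : ℂ) • 1 - XOff d) := by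
    rw [X1_add_X2_add_X3_add_X6, XOff]
    push_cast
    module
  rw [hZ]
  exact ((isHermitian_XOff d).posSemidef_smul_one_sub_of_sum_norm_le
    (sum_norm_XOff_le d hd)).smul (by positivity)
end

section
/- For the channel E with Choi matrix J(E) = (1/(d-1)) Σ_{i≠j}(|ij⟩⟨ij| + |ij⟩⟨ji|), the average over phase tuples θ (uniform on [0,2π)^d) of the fidelity ⟨-θ| E(|θ⟩⟨θ|) |-θ⟩ equals 2/d. -/
open scoped BigOperators
open Matrix MeasureTheory

noncomputable section

/-- `J(E) = (1/(d-1)) Σ_{i≠j} (|ij⟩⟨ij| + |ij⟩⟨ji|)`. -/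
def Jopt (d : ℕ) : Matrix (Fin d × Fin d) (Fin d × Fin d) ℂ :=
  ((d : ℂ) - 1)⁻¹ • ∑ i : Fin d, ∑ j : Fin d,
    if i ≠ j then
      Matrix.single (i, j) (i, j) (1 : ℂ) +
      Matrix.single (i, j) (j, i) (1 : ℂ)
    else 0

/-- The maximally coherent state `|θ⟩`. -/
def coherentKet (d : ℕ) (θ : Fin d → ℝ) : Fin d → ℂ :=
  fun k => (1 / Real.sqrt d : ℝ) * Complex.exp (Complex.I * (θ k))

/-- The channel `E(ρ) = Tr_1[J(E)(ρ^T ⊗ 𝟙)]`. -/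
def chan (d : ℕ) (ρ : Matrix (Fin d) (Fin d) ℂ) : Matrix (Fin d) (Fin d) ℂ :=
  Matrix.of fun i j => ∑ a : Fin d,
    (Jopt d * (ρ.transpose.kroneckerMap (· * ·) (1 : Matrix (Fin d) (Fin d) ℂ))) (a, i) (a, j)

/-- The pure state `|θ⟩⟨θ|`. -/
def rhoTheta (d : ℕ) (θ : Fin d → ℝ) : Matrix (Fin d) (Fin d) ℂ :=
  Matrix.of fun i j => coherentKet d θ i * (starRingEnd ℂ) (coherentKet d θ j)

/-- The fidelity `⟨-θ| E(|θ⟩⟨θ|) |-θ⟩`. -/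
def fidTheta (d : ℕ) (θ : Fin d → ℝ) : ℂ :=
  ∑ i : Fin d, ∑ j : Fin d,
    (starRingEnd ℂ) (coherentKet d (fun k => -θ k) i) *
      (chan d (rhoTheta d θ)) i j * coherentKet d (fun k => -θ k) j

end

/-!
The fidelity does not depend on `θ`, so the average is trivial. Reading off the Choi matrix,
`E(ρ)ᵢᵢ = (Tr ρ - ρᵢᵢ)/(d-1)` and `E(ρ)ᵢⱼ = ρⱼᵢ/(d-1)` for `i ≠ j`. Sandwiched between
`⟨-θ|` and `|-θ⟩`, each entry of `E(|θ⟩⟨θ|)` picks up phases that cancel exactly, leaving products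
of the moduli `|θₖ|² = 1/d`: the diagonal and the off-diagonal entries each contribute `1/d`.
-/

theorem Fintype.sum_ite_eq_else {ι R : Type*} [Fintype ι] [DecidableEq ι] [Ring R] (i : ι)
    (a b : R) : ∑ j, (if i = j then a else b) = a + (Fintype.card ι - 1) * b := by
  have h : ∀ j, (if i = j then a else b) = (if i = j then a - b else 0) + b := by
    intro j; split_ifs <;> simp
  simp [h, Finset.sum_add_distrib, sub_one_mul]
  abel

section

open ComplexConjugate

variable {d : ℕ}

lemma Jopt_apply (p q : Fin d × Fin d) :
    Jopt d p q = ((d : ℂ) - 1)⁻¹ *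
      if p.1 ≠ p.2 then (if p = q then 1 else 0) + (if p.swap = q then 1 else 0) else 0 := by
  simp only [Jopt, Matrix.smul_apply, Matrix.sum_apply, smul_eq_mul, ← Fintype.sum_prod_type']
  congr 1
  rw [Fintype.sum_eq_single p]
  · simp [apply_ite (fun M : Matrix (Fin d × Fin d) (Fin d × Fin d) ℂ => M p q),
      Matrix.single_apply, Prod.swap]
  · intro r hr
    simp [apply_ite (fun M : Matrix (Fin d × Fin d) (Fin d × Fin d) ℂ => M p q), hr]

lemma chan_apply (ρ : Matrix (Fin d) (Fin d) ℂ) (i j : Fin d) :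
    chan d ρ i j = ((d : ℂ) - 1)⁻¹ * if i = j then ρ.trace - ρ i i else ρ j i := by
  have h : chan d ρ i j = ∑ a, ∑ b, Jopt d (a, i) (b, j) * ρ a b := by
    simp [chan, Matrix.mul_apply, Fintype.sum_prod_type, Matrix.one_apply]
  simp only [h, Jopt_apply, mul_assoc, ← Finset.mul_sum]
  congr 1
  split_ifs with hij
  · subst hij
    simp +contextual [Prod.ext_iff, Matrix.trace, Finset.sum_ite, Finset.filter_ne',
      Finset.sum_erase_eq_sub]
  · rw [Fintype.sum_eq_single j] <;> simp +contextual [hij, Ne.symm hij, Prod.ext_iff]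

lemma coherentKet_neg (θ : Fin d → ℝ) (k : Fin d) :
    coherentKet d (fun k => -θ k) k = conj (coherentKet d θ k) := by
  simp [coherentKet, ← Complex.exp_conj]

lemma coherentKet_mul_conj (θ : Fin d → ℝ) (k : Fin d) :
    coherentKet d θ k * conj (coherentKet d θ k) = (d : ℂ)⁻¹ := by
  rw [Complex.mul_conj, Complex.normSq_eq_norm_sq]
  simp [coherentKet, Complex.norm_exp_I_mul_ofReal]

lemma trace_rhoTheta (hd : d ≠ 0) (θ : Fin d → ℝ) : (rhoTheta d θ).trace = 1 := by
  simp [Matrix.trace, rhoTheta, coherentKet_mul_conj, hd]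

lemma fidTheta_summand (hd : d ≠ 0) (θ : Fin d → ℝ) (i j : Fin d) :
    conj (coherentKet d (fun k => -θ k) i) * chan d (rhoTheta d θ) i j *
        coherentKet d (fun k => -θ k) j =
      ((d : ℂ) - 1)⁻¹ *
        if i = j then (d : ℂ)⁻¹ * (1 - (d : ℂ)⁻¹) else (d : ℂ)⁻¹ * (d : ℂ)⁻¹ := by
  have hφ := coherentKet_mul_conj θ
  rw [coherentKet_neg, coherentKet_neg, Complex.conj_conj, chan_apply, trace_rhoTheta hd]
  simp only [rhoTheta, Matrix.of_apply]
  split_ifs with hij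
  · subst hij
    linear_combination
      ((d : ℂ) - 1)⁻¹ * (1 - coherentKet d θ i * conj (coherentKet d θ i) - (d : ℂ)⁻¹) * hφ i
  · linear_combination
      ((d : ℂ) - 1)⁻¹ * (coherentKet d θ j * conj (coherentKet d θ j) * hφ i + (d : ℂ)⁻¹ * hφ j)

lemma fidTheta_eq_two_div (hd : 2 ≤ d) (θ : Fin d → ℝ) : fidTheta d θ = 2 / d := by
  have hd0 : d ≠ 0 := by omega
  have hd0' : (d : ℂ) ≠ 0 := Nat.cast_ne_zero.mpr hd0
  have hd1 : (d : ℂ) - 1 ≠ 0 := by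
    rw [sub_ne_zero]; exact_mod_cast (show d ≠ 1 by omega)
  simp only [fidTheta, fidTheta_summand hd0, ← Finset.mul_sum,
    Fintype.sum_ite_eq_else, Finset.sum_const, Finset.card_univ, Fintype.card_fin, nsmul_eq_mul]
  field_simp
  ring

end

/-- the average over `θ` uniform on `[0,2π)^d` of `⟨-θ|E(|θ⟩⟨θ|)|-θ⟩`
equals `2/d`. -/
theorem average_transpose_fidelity (d : ℕ) (hd : 2 ≤ d) :
    ((2 * Real.pi : ℂ)^d)⁻¹ *
      (∫ θ in Set.univ.pi (fun _ : Fin d => Set.Ico (0:ℝ) (2 * Real.pi)), fidTheta d θ)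
      = 2 / (d : ℂ) := by
  have hvol : volume.real (Set.univ.pi (fun _ : Fin d => Set.Ico (0:ℝ) (2 * Real.pi)))
      = (2 * Real.pi) ^ d := by
    rw [measureReal_def, Real.volume_pi_Ico_toReal (fun _ => by positivity)]
    simp
  have hπ : (2 * Real.pi : ℂ) ^ d ≠ 0 := by simp [Real.pi_ne_zero]
  simp only [fidTheta_eq_two_div hd, setIntegral_const, hvol, Complex.real_smul,
    Complex.ofReal_pow, Complex.ofReal_mul, Complex.ofReal_ofNat, inv_mul_cancel_left₀ hπ]
end

section
/- Subject to c_+, c_-, c_0 ≥ 0 and the trace constraint ((d²+3d+2)/6)c_+ + ((d²-3d+2)/6)c_- + (2(d²-1)/3)c_0 = 1, the maximum of c_+ is 6/(d²+3d+2), attained at c_- = c_0 = 0. Consequently the optimal process fidelity of the 1→2 universal transpose cloning map is 6/(d²+3d+2). -/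
theorem isGreatest_of_linear_budget {a b c : ℝ} (ha : 0 < a) (hb : 0 ≤ b) (hc : 0 ≤ c) :
    IsGreatest {x : ℝ | ∃ y z : ℝ, 0 ≤ x ∧ 0 ≤ y ∧ 0 ≤ z ∧ a * x + b * y + c * z = 1} a⁻¹ := by
  refine ⟨⟨0, 0, inv_nonneg.mpr ha.le, le_rfl, le_rfl, ?_⟩, ?_⟩
  · rw [mul_inv_cancel₀ ha.ne']
    ring
  · rintro x ⟨y, z, -, hy, hz, hbudget⟩
    rw [← one_div, le_div_iff₀ ha]
    nlinarith [mul_nonneg hb hy, mul_nonneg hc hz]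

/-- subject to `c₊, c₋, c₀ ≥ 0` and the trace constraint
`((d²+3d+2)/6)c₊ + ((d²-3d+2)/6)c₋ + (2(d²-1)/3)c₀ = 1`, the maximum of `c₊` is
`6/(d²+3d+2)`, attained at `c₋ = c₀ = 0`.  This is the optimal process fidelity of the
1→2 universal transpose cloning map. -/
theorem universal_transpose_cloning_LP (d : ℕ) (hd : 2 ≤ d) :
    IsGreatest {cp : ℝ | ∃ cm c0 : ℝ,
        0 ≤ cp ∧ 0 ≤ cm ∧ 0 ≤ c0 ∧
        (((d:ℝ)^2 + 3*(d:ℝ) + 2)/6) * cp + (((d:ℝ)^2 - 3*(d:ℝ) + 2)/6) * cm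
          + (2*((d:ℝ)^2 - 1)/3) * c0 = 1}
      (6 / ((d:ℝ)^2 + 3*(d:ℝ) + 2)) ∧
    (((d:ℝ)^2 + 3*(d:ℝ) + 2)/6) * (6 / ((d:ℝ)^2 + 3*(d:ℝ) + 2))
      + (((d:ℝ)^2 - 3*(d:ℝ) + 2)/6) * 0 + (2*((d:ℝ)^2 - 1)/3) * 0 = 1 := by
  have hd2 : (2 : ℝ) ≤ d := by exact_mod_cast hd
  have hplus : 0 < ((d : ℝ)^2 + 3 * d + 2) / 6 := by positivity
  -- `d² - 3d + 2 = (d - 1)(d - 2)`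
  have hminus : 0 ≤ ((d : ℝ)^2 - 3 * d + 2) / 6 := by nlinarith
  have hzero : 0 ≤ 2 * ((d : ℝ)^2 - 1) / 3 := by nlinarith
  rw [← inv_div ((d : ℝ)^2 + 3 * d + 2) 6]
  exact ⟨isGreatest_of_linear_budget hplus hminus hzero,
    by rw [mul_inv_cancel₀ hplus.ne']; ring⟩
end

section
/- For d ≥ 3, with k_d = 1/((d-1)(d-2)), the operator X = k_d(X_4 + X_5 + X_6) on (ℂ^d)^{⊗3} is positive semidefinite, satisfies Tr_{23} X = 𝟙, and Tr[(φ_d^+)^{⊗3} X] = 6/d². -/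
open scoped BigOperators ComplexOrder
open Matrix

noncomputable section

def Y1 (d : ℕ) := ∑ i : Fin d, E3 d (i,i,i) (i,i,i)

def Y2 (d : ℕ) := ∑ i : Fin d, ∑ k : Fin d,
  if i ≠ k then E3 d (i,i,k) (i,i,k) + E3 d (i,k,i) (i,k,i) + E3 d (k,i,i) (k,i,i) else 0

def Y3 (d : ℕ) := ∑ i : Fin d, ∑ k : Fin d,
  if i ≠ k then E3 d (i,i,k) (k,i,i) + E3 d (k,i,i) (i,i,k) + E3 d (k,i,i) (i,k,i)
    + E3 d (i,i,k) (i,k,i) + E3 d (i,k,i) (i,i,k) else 0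

def Y4 (d : ℕ) := ∑ i : Fin d, ∑ k : Fin d, ∑ l : Fin d,
  if i ≠ k ∧ k ≠ l ∧ i ≠ l then E3 d (i,k,l) (i,k,l) else 0

def Y5 (d : ℕ) := ∑ i : Fin d, ∑ k : Fin d, ∑ l : Fin d,
  if i ≠ k ∧ k ≠ l ∧ i ≠ l then E3 d (i,k,l) (k,l,i) + E3 d (i,k,l) (l,i,k) else 0

def Y6 (d : ℕ) := ∑ i : Fin d, ∑ k : Fin d, ∑ l : Fin d,
  if i ≠ k ∧ k ≠ l ∧ i ≠ l then
    E3 d (i,k,l) (k,i,l) + E3 d (i,k,l) (l,k,i) + E3 d (i,k,l) (i,l,k) else 0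

end

/-!
`X₄ + X₅ + X₆` is the compression `D S D` of the unnormalised symmetrizer `S = ∑_σ P_σ` of the
three tensor factors, where `D` projects onto the span of the triples with distinct entries. Since
`S` is Hermitian with `S² = 6 S`, it is positive semidefinite, and so is `D S D`. On distinct
triples only the identity permutation keeps the last two indices fixed, so `Tr₂₃` counts the
`(d - 1)(d - 2)` distinct completions of a first index; every row of `S` sums to `6`, so the
overlap with the all-`1/d³` matrix `(φ_d^+)^{⊗3}` is `6 d (d - 1)(d - 2) / d³` before normalising.
-/

open Matrix

section Triples

variable {α : Type*} [DecidableEq α]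

/-- `∑_σ P_σ` over the six permutations `σ` of the tensor factors of `α × α × α`. -/
def symmetrizer : Matrix (α × α × α) (α × α × α) ℂ :=
  of fun (a, b, c) q =>
    (if q = (a, b, c) then 1 else 0) + (if q = (b, c, a) then 1 else 0) +
    (if q = (c, a, b) then 1 else 0) + (if q = (b, a, c) then 1 else 0) +
    (if q = (c, b, a) then 1 else 0) + (if q = (a, c, b) then 1 else 0)

def distinctProj : Matrix (α × α × α) (α × α × α) ℂ :=
  diagonal fun (a, b, c) => if a ≠ b ∧ b ≠ c ∧ a ≠ c then 1 else 0

lemma symmetrizer_isHermitian : (symmetrizer : Matrix (α × α × α) _ ℂ).IsHermitian := by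
  ext ⟨a, b, c⟩ ⟨x, y, z⟩
  simp only [conjTranspose_apply, symmetrizer, of_apply, star_add, apply_ite (star : ℂ → ℂ),
    star_one, star_zero]
  -- `p = σ q` is `q = σ⁻¹ p`, and the six permutations are closed under inversion.
  have h₁ : ((a, b, c) = (y, z, x)) = ((x, y, z) = (c, a, b)) := by grind
  have h₂ : ((a, b, c) = (z, x, y)) = ((x, y, z) = (b, c, a)) := by grind
  have h₃ : ((a, b, c) = (y, x, z)) = ((x, y, z) = (b, a, c)) := by grind
  have h₄ : ((a, b, c) = (z, y, x)) = ((x, y, z) = (c, b, a)) := by grind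
  have h₅ : ((a, b, c) = (x, z, y)) = ((x, y, z) = (a, c, b)) := by grind
  simp only [h₁, h₂, h₃, h₄, h₅, eq_comm (a := (a, b, c))]
  ring

lemma distinctProj_isHermitian : (distinctProj : Matrix (α × α × α) _ ℂ).IsHermitian := by
  rw [distinctProj, isHermitian_diagonal_iff]
  rintro ⟨a, b, c⟩
  dsimp only
  split_ifs <;> simp

-- A permutation of a triple with distinct entries has distinct entries.
lemma symmetrizer_apply_eq_zero {a b c x y z : α} (habc : a ≠ b ∧ b ≠ c ∧ a ≠ c)
    (hxyz : ¬(x ≠ y ∧ y ≠ z ∧ x ≠ z)) : symmetrizer (a, b, c) (x, y, z) = 0 := by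
  simp only [symmetrizer, of_apply, Prod.mk.injEq]
  grind

variable [Fintype α]

lemma symmetrizer_mul_self :
    (symmetrizer : Matrix (α × α × α) _ ℂ) * symmetrizer = (6 : ℂ) • symmetrizer := by
  ext ⟨a, b, c⟩ ⟨x, y, z⟩
  simp only [mul_apply, symmetrizer, of_apply, Matrix.smul_apply, add_mul, ite_mul, one_mul,
    zero_mul, Finset.sum_add_distrib, Finset.sum_ite_eq', Finset.mem_univ, if_true, smul_eq_mul]
  ring

lemma symmetrizer_posSemidef : (symmetrizer : Matrix (α × α × α) _ ℂ).PosSemidef := by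
  have h : (symmetrizer : Matrix (α × α × α) _ ℂ) =
      (6 : ℂ)⁻¹ • (symmetrizerᴴ * symmetrizer) := by
    rw [symmetrizer_isHermitian.eq, symmetrizer_mul_self, smul_smul]
    norm_num
  rw [h]
  exact (posSemidef_conjTranspose_mul_self _).smul (by positivity)

lemma sum_symmetrizer_apply (p : α × α × α) : ∑ q, symmetrizer p q = 6 := by
  obtain ⟨a, b, c⟩ := p
  simp [symmetrizer, Finset.sum_add_distrib]
  norm_num

lemma sum_sum_ite_distinct (i : α) :
    ∑ j : α, ∑ k : α, (if i ≠ j ∧ j ≠ k ∧ i ≠ k then (1 : ℂ) else 0) =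
      ((Fintype.card α : ℂ) - 1) * ((Fintype.card α : ℂ) - 2) := by
  have inclusion_exclusion (j k : α) : (if i ≠ j ∧ j ≠ k ∧ i ≠ k then (1 : ℂ) else 0) =
      1 - (if i = j then 1 else 0) - (if j = k then 1 else 0) - (if i = k then 1 else 0) +
        2 * (if i = j then 1 else 0) * (if j = k then 1 else 0) := by
    by_cases hij : i = j <;> by_cases hjk : j = k <;> by_cases hik : i = k <;> simp_all
    norm_num
  simp [inclusion_exclusion, Finset.sum_add_distrib, Finset.sum_sub_distrib]
  ring

end Triples

section TransposeCloning

variable {d : ℕ}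

lemma Y4_apply (a b c x y z : Fin d) : Y4 d (a, b, c) (x, y, z) =
    if a ≠ b ∧ b ≠ c ∧ a ≠ c then (if (x, y, z) = (a, b, c) then 1 else 0) else 0 := by
  simp only [Y4, E3, Matrix.sum_apply, ← Fintype.sum_prod_type']
  rw [Finset.sum_eq_single (a, b, c)] <;> simp +contextual [Matrix.ite_apply, single_apply, eq_comm]

lemma Y5_apply (a b c x y z : Fin d) : Y5 d (a, b, c) (x, y, z) =
    if a ≠ b ∧ b ≠ c ∧ a ≠ c then
      (if (x, y, z) = (b, c, a) then 1 else 0) + (if (x, y, z) = (c, a, b) then 1 else 0)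
    else 0 := by
  simp only [Y5, E3, Matrix.sum_apply, ← Fintype.sum_prod_type']
  rw [Finset.sum_eq_single (a, b, c)] <;> simp +contextual [Matrix.ite_apply, single_apply, eq_comm]

lemma Y6_apply (a b c x y z : Fin d) : Y6 d (a, b, c) (x, y, z) =
    if a ≠ b ∧ b ≠ c ∧ a ≠ c then
      (if (x, y, z) = (b, a, c) then 1 else 0) + (if (x, y, z) = (c, b, a) then 1 else 0) +
        (if (x, y, z) = (a, c, b) then 1 else 0)
    else 0 := by
  simp only [Y6, E3, Matrix.sum_apply, ← Fintype.sum_prod_type']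
  rw [Finset.sum_eq_single (a, b, c)] <;> simp +contextual [Matrix.ite_apply, single_apply, eq_comm]

lemma Y456_apply (a b c : Fin d) (q : Fin d × Fin d × Fin d) :
    (Y4 d + Y5 d + Y6 d) (a, b, c) q =
      if a ≠ b ∧ b ≠ c ∧ a ≠ c then symmetrizer (a, b, c) q else 0 := by
  obtain ⟨x, y, z⟩ := q
  rw [Matrix.add_apply, Matrix.add_apply, Y4_apply, Y5_apply, Y6_apply]
  by_cases habc : a ≠ b ∧ b ≠ c ∧ a ≠ c
  · rw [if_pos habc, if_pos habc, if_pos habc, if_pos habc, symmetrizer, of_apply]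
    ring
  · rw [if_neg habc, if_neg habc, if_neg habc, if_neg habc, add_zero, add_zero]

lemma Y456_eq : Y4 d + Y5 d + Y6 d = distinctProj * symmetrizer * distinctProj := by
  ext ⟨a, b, c⟩ ⟨x, y, z⟩
  simp only [Y456_apply, distinctProj, mul_diagonal, diagonal_mul]
  by_cases habc : a ≠ b ∧ b ≠ c ∧ a ≠ c
  · by_cases hxyz : x ≠ y ∧ y ≠ z ∧ x ≠ z
    · simp [habc, hxyz]
    · simp [habc, hxyz, symmetrizer_apply_eq_zero habc hxyz]
  · simp [habc]

lemma Y456_posSemidef : (Y4 d + Y5 d + Y6 d).PosSemidef := by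
  have h := symmetrizer_posSemidef.conjTranspose_mul_mul_same (distinctProj (α := Fin d))
  rwa [distinctProj_isHermitian.eq, ← Y456_eq] at h

lemma Y456_apply_mk_same_tail (i j k l : Fin d) :
    (Y4 d + Y5 d + Y6 d) (i, j, k) (l, j, k) =
      if i ≠ j ∧ j ≠ k ∧ i ≠ k then (if i = l then 1 else 0) else 0 := by
  rw [Y456_apply]
  simp only [symmetrizer, of_apply, Prod.mk.injEq]
  grind

lemma ptrace23_smul (c : ℂ) (M : Matrix (Fin d × Fin d × Fin d) (Fin d × Fin d × Fin d) ℂ) :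
    ptrace23 d (c • M) = c • ptrace23 d M := by
  ext i l
  simp [ptrace23, Finset.mul_sum]

lemma ptrace23_Y456 :
    ptrace23 d (Y4 d + Y5 d + Y6 d) = (((d : ℂ) - 1) * ((d : ℂ) - 2)) • 1 := by
  ext i l
  simp only [ptrace23, of_apply, Y456_apply_mk_same_tail, Matrix.smul_apply, one_apply, smul_eq_mul]
  split_ifs with hil
  · subst hil
    simpa using sum_sum_ite_distinct i
  · simp

lemma trace_Phi3_mul (A : Matrix (Fin d × Fin d × Fin d) (Fin d × Fin d × Fin d) ℂ) :
    (Phi3 d * A).trace = (∑ p, ∑ q, A p q) / (d : ℂ) ^ 3 := by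
  simp only [trace, diag, mul_apply, Phi3, of_apply, Finset.sum_div]
  rw [Finset.sum_comm]
  simp only [one_div, inv_mul_eq_div]

lemma sum_sum_Y456 :
    ∑ p, ∑ q, (Y4 d + Y5 d + Y6 d) p q =
      6 * ((d : ℂ) * (((d : ℂ) - 1) * ((d : ℂ) - 2))) := by
  have row (a b c : Fin d) : ∑ q, (Y4 d + Y5 d + Y6 d) (a, b, c) q =
      6 * (if a ≠ b ∧ b ≠ c ∧ a ≠ c then 1 else 0) := by
    simp only [Y456_apply]
    split_ifs
    · simp [sum_symmetrizer_apply]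
    · simp
  simp only [Fintype.sum_prod_type, row, ← Finset.mul_sum, sum_sum_ite_distinct]
  simp
  ring

end TransposeCloning

/-- for `d ≥ 3`, `X = (1/((d-1)(d-2)))(X_4 + X_5 + X_6)` is positive
semidefinite, `Tr₂₃ X = 𝟙`, and `Tr[(φ_d^+)^{⊗3} X] = 6/d²`. -/
theorem transpose_cloning_primal (d : ℕ) (hd : 3 ≤ d) :
    ((((d:ℂ) - 1) * ((d:ℂ) - 2))⁻¹ • (Y4 d + Y5 d + Y6 d)).PosSemidef ∧
    ptrace23 d ((((d:ℂ) - 1) * ((d:ℂ) - 2))⁻¹ • (Y4 d + Y5 d + Y6 d)) = 1 ∧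
    (Phi3 d * ((((d:ℂ) - 1) * ((d:ℂ) - 2))⁻¹ • (Y4 d + Y5 d + Y6 d))).trace
      = 6 / (d : ℂ)^2 := by
  set c := ((d:ℂ) - 1) * ((d:ℂ) - 2) with hc
  have hc₀ : c ≠ 0 := by
    simp only [hc, ne_eq, mul_eq_zero, sub_eq_zero, not_or]
    norm_cast
    omega
  refine ⟨Y456_posSemidef.smul ?_, ?_, ?_⟩
  · have hd' : (3 : ℝ) ≤ d := by exact_mod_cast hd
    have hc_real : c = ((((d:ℝ) - 1) * ((d:ℝ) - 2) : ℝ) : ℂ) := by push_cast; rfl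
    rw [hc_real, ← Complex.ofReal_inv, Complex.zero_le_real]
    exact inv_nonneg.mpr (by nlinarith)
  · rw [ptrace23_smul, ptrace23_Y456, smul_smul, inv_mul_cancel₀ hc₀, one_smul]
  · have hd₀ : (d:ℂ) ≠ 0 := by norm_cast; omega
    rw [trace_Phi3_mul]
    simp only [Matrix.smul_apply, smul_eq_mul, ← Finset.mul_sum, sum_sum_Y456, ← hc]
    field_simp
end
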